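/- 𝒫^fd is a nonempty compact subset of [0,1]^{𝒜×𝒜_ℒ⁰} endowed with the product topology of pointwise convergence. -/

import Mathlib

open Set

open scoped Classical

variable {Ω : Type*}

/-- A field of sets on `Ω`: contains `univ`, closed under complements and finite unions. -/
def IsSetField (𝒜 : Set (Set Ω)) : Prop :=
  Set.univ ∈ 𝒜 ∧ (∀ A ∈ 𝒜, Aᶜ ∈ 𝒜) ∧ ∀ A ∈ 𝒜, ∀ B ∈ 𝒜, A ∪ B ∈ 𝒜

/-- A finitely additive probability on the field `𝒜`. -/
def IsFAP (𝒜 : Set (Set Ω)) (P : Set Ω → ℝ) : Prop :=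
  (∀ A ∈ 𝒜, 0 ≤ P A ∧ P A ≤ 1) ∧ P Set.univ = 1 ∧
    ∀ A ∈ 𝒜, ∀ B ∈ 𝒜, Disjoint A B → P (A ∪ B) = P A + P B

/-- A partition of `Ω` into nonempty pairwise disjoint pieces. -/
def IsPartition {ι : Type*} (H : ι → Set Ω) : Prop :=
  (∀ i, (H i).Nonempty) ∧ (Pairwise fun i j => Disjoint (H i) (H j)) ∧
    (⋃ i, H i) = Set.univ

/-- A field containing every member of the partition `H` and whose members are
unions of members of the partition. -/
def IsFieldOver {ι : Type*} (H : ι → Set Ω) (𝒜L : Set (Set Ω)) : Prop :=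
  IsSetField 𝒜L ∧ (∀ i, H i ∈ 𝒜L) ∧ ∀ A ∈ 𝒜L, ∃ S : Set ι, A = ⋃ i ∈ S, H i

/-- A field containing `𝒜L ∪ 𝒜E` whose members are unions of the atoms `H i ∩ E j`. -/
def IsJointField {ι κ : Type*} (H : ι → Set Ω) (E : κ → Set Ω)
    (𝒜L 𝒜E 𝒜 : Set (Set Ω)) : Prop :=
  IsSetField 𝒜 ∧ 𝒜L ⊆ 𝒜 ∧ 𝒜E ⊆ 𝒜 ∧
    ∀ A ∈ 𝒜, ∃ S : Set (ι × κ), A = ⋃ p ∈ S, H p.1 ∩ E p.2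

/-- A strategy on `𝒜 × ℒ`: each `σ (·|H i)` is a finitely additive probability on `𝒜`
equal to `1` on events implied by `H i`. -/
def IsStrategy {ι : Type*} (𝒜 : Set (Set Ω)) (H : ι → Set Ω) (σ : Set Ω → ι → ℝ) : Prop :=
  ∀ i, IsFAP 𝒜 (fun F => σ F i) ∧ ∀ F ∈ 𝒜, H i ⊆ F → σ F i = 1

/-- A full conditional probability on the field `𝒜` (conditions (C1), (C2), (C3)). -/
def IsFCP (𝒜 : Set (Set Ω)) (P : Set Ω → Set Ω → ℝ) : Prop :=
  (∀ E ∈ 𝒜, ∀ K ∈ 𝒜, K.Nonempty → P E K = P (E ∩ K) K) ∧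
  (∀ K ∈ 𝒜, K.Nonempty → IsFAP 𝒜 fun E => P E K) ∧
  ∀ E ∈ 𝒜, ∀ F ∈ 𝒜, ∀ K ∈ 𝒜, K.Nonempty → (E ∩ K).Nonempty →
    P (E ∩ F) K = P E K * P F (E ∩ K)

/-- `P` extends the prior `π` on `𝒜L` and the strategy `σ` on `𝒜 × ℒ`. -/
def ExtendsPriorStrategy {ι : Type*} (𝒜 𝒜L : Set (Set Ω)) (H : ι → Set Ω)
    (π : Set Ω → ℝ) (σ : Set Ω → ι → ℝ) (P : Set Ω → Set Ω → ℝ) : Prop :=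
  (∀ B ∈ 𝒜L, P B Set.univ = π B) ∧ ∀ F ∈ 𝒜, ∀ i, P F (H i) = σ F i

/-- The set `𝒫` of full conditional probabilities on `𝒜` extending `{π, σ}`. -/
def FCPSet {ι : Type*} (𝒜 𝒜L : Set (Set Ω)) (H : ι → Set Ω)
    (π : Set Ω → ℝ) (σ : Set Ω → ι → ℝ) : Set (Set Ω → Set Ω → ℝ) :=
  {P | IsFCP 𝒜 P ∧ ExtendsPriorStrategy 𝒜 𝒜L H π σ P}

/-- Lower envelope of a set of conditional probabilities at `F|K`. -/
noncomputable def lowEnv (Ps : Set (Set Ω → Set Ω → ℝ)) (F K : Set Ω) : ℝ :=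
  sInf ((fun P => P F K) '' Ps)

/-- Upper envelope of a set of conditional probabilities at `F|K`. -/
noncomputable def upEnv (Ps : Set (Set Ω → Set Ω → ℝ)) (F K : Set Ω) : ℝ :=
  sSup ((fun P => P F K) '' Ps)

/-- A finite partition of `Ω` contained in `𝒜L`. -/
def IsFinPart (𝒜L : Set (Set Ω)) (T : Finset (Set Ω)) : Prop :=
  (↑T : Set (Set Ω)) ⊆ 𝒜L ∧ (∀ A ∈ T, (A : Set Ω).Nonempty) ∧
    (∀ A ∈ T, ∀ B ∈ T, A ≠ B → Disjoint A B) ∧ ⋃₀ (↑T : Set (Set Ω)) = Set.univ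

/-- Lower Stieltjes integral of `X : ℒ → ℝ` with respect to `μ` on `𝒜L`. -/
noncomputable def lowerSInt {ι : Type*} (H : ι → Set Ω) (𝒜L : Set (Set Ω))
    (X : ι → ℝ) (μ : Set Ω → ℝ) : ℝ :=
  sSup {x | ∃ T : Finset (Set Ω), IsFinPart 𝒜L T ∧
    x = ∑ A ∈ T, sInf {y | ∃ i, H i ⊆ A ∧ y = X i} * μ A}

/-- Upper Stieltjes integral of `X : ℒ → ℝ` with respect to `μ` on `𝒜L`. -/
noncomputable def upperSInt {ι : Type*} (H : ι → Set Ω) (𝒜L : Set (Set Ω))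
    (X : ι → ℝ) (μ : Set Ω → ℝ) : ℝ :=
  sInf {x | ∃ T : Finset (Set Ω), IsFinPart 𝒜L T ∧
    x = ∑ A ∈ T, sSup {y | ∃ i, H i ⊆ A ∧ y = X i} * μ A}

/-- `𝒜L`-continuity of a bounded function `X : ℒ → ℝ`. -/
def ALContinuous {ι : Type*} (H : ι → Set Ω) (𝒜L : Set (Set Ω)) (X : ι → ℝ) : Prop :=
  (∃ M : ℝ, ∀ i, |X i| ≤ M) ∧ ∀ t : ℝ, ∀ ε > (0 : ℝ), ∃ A ∈ 𝒜L,
    (⋃ i ∈ {i | t + ε ≤ X i}, H i) ⊆ A ∧ A ⊆ ⋃ i ∈ {i | t ≤ X i}, H i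

/-- Countable additivity of `P` on the field `𝒜`. -/
def CountablyAdditiveOn (𝒜 : Set (Set Ω)) (P : Set Ω → ℝ) : Prop :=
  ∀ A : ℕ → Set Ω, (∀ n, A n ∈ 𝒜) → (Pairwise fun m n => Disjoint (A m) (A n)) →
    (⋃ n, A n) ∈ 𝒜 → HasSum (fun n => P (A n)) (P (⋃ n, A n))

/-- A (normalized) capacity on the field `𝒜`. -/
def IsCapacity (𝒜 : Set (Set Ω)) (φ : Set Ω → ℝ) : Prop :=
  φ ∅ = 0 ∧ φ Set.univ = 1 ∧ (∀ A ∈ 𝒜, 0 ≤ φ A ∧ φ A ≤ 1) ∧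
    ∀ A ∈ 𝒜, ∀ B ∈ 𝒜, A ⊆ B → φ A ≤ φ B

/-- Total monotonicity of a capacity `φ` on the field `𝒜`. -/
def TotallyMonotone (𝒜 : Set (Set Ω)) (φ : Set Ω → ℝ) : Prop :=
  ∀ n : ℕ, 2 ≤ n → ∀ A : Fin n → Set Ω, (∀ i, A i ∈ 𝒜) →
    ∑ s ∈ Finset.univ.powerset.filter (fun s : Finset (Fin n) => s.Nonempty),
      (-1 : ℝ) ^ (s.card - 1) * φ (⋂ i ∈ s, A i) ≤ φ (⋃ i, A i)

/-- Restriction of a conditional probability to the domain `𝒜 × ℬ⁰`, viewed as a point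
of the product space `ℝ^(𝒜 × ℬ⁰)`. -/
def restrictPairs (𝒜 ℬ : Set (Set Ω)) (Q : Set Ω → Set Ω → ℝ)
    (p : {p : Set Ω × Set Ω // p.1 ∈ 𝒜 ∧ p.2 ∈ ℬ ∧ p.2.Nonempty}) : ℝ :=
  Q p.val.1 p.val.2

/-- Restriction of a set function to the domain `𝒜`, viewed as a point of `ℝ^𝒜`. -/
def restrictDom (𝒜 : Set (Set Ω)) (μ : Set Ω → ℝ) (A : {A : Set Ω // A ∈ 𝒜}) : ℝ :=
  μ A.val

/-- The field of all unions of members of the partition `H`, i.e. `⟨ℒ⟩*`. -/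
def unionsOf {ι : Type*} (H : ι → Set Ω) : Set (Set Ω) :=
  {A | ∃ S : Set ι, A = ⋃ i ∈ S, H i}

/-- The set `𝒬^fd` of fully ℒ-disintegrable full conditional probabilities on `𝒜`
extending `{π, σ}`. -/
def QfdSet {ι : Type*} (𝒜 𝒜L : Set (Set Ω)) (H : ι → Set Ω)
    (π : Set Ω → ℝ) (σ : Set Ω → ι → ℝ) : Set (Set Ω → Set Ω → ℝ) :=
  {Q | IsFCP 𝒜 Q ∧ ExtendsPriorStrategy 𝒜 𝒜L H π σ Q ∧
    ∀ F ∈ 𝒜, ∀ K ∈ 𝒜L, K.Nonempty →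
      Q F K = lowerSInt H 𝒜L (fun i => σ F i) fun B => Q B K}

/-- The set `𝒬^fsc` of fully strongly ℒ-conglomerable full conditional probabilities
on `𝒜` extending `{π, σ}`. -/
def QfscSet {ι : Type*} (𝒜 𝒜L : Set (Set Ω)) (H : ι → Set Ω)
    (π : Set Ω → ℝ) (σ : Set Ω → ι → ℝ) : Set (Set Ω → Set Ω → ℝ) :=
  {Q | IsFCP 𝒜 Q ∧ ExtendsPriorStrategy 𝒜 𝒜L H π σ Q ∧
    ∀ F ∈ 𝒜, ∀ K ∈ 𝒜L, K.Nonempty → ∀ B ∈ 𝒜L, B.Nonempty → B ⊆ K →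
      Q B K * sInf {x | ∃ i, H i ⊆ B ∧ x = σ F i} ≤ Q (F ∩ B) K ∧
      Q (F ∩ B) K ≤ Q B K * sSup {x | ∃ i, H i ⊆ B ∧ x = σ F i}}

/-- The set `𝒫^sc` of strongly ℒ-conglomerable joint probabilities consistent with `{π, σ}`. -/
def PscSet {ι : Type*} (𝒜 𝒜L : Set (Set Ω)) (H : ι → Set Ω)
    (π : Set Ω → ℝ) (σ : Set Ω → ι → ℝ) : Set (Set Ω → ℝ) :=
  {μ | (∃ P ∈ FCPSet 𝒜 𝒜L H π σ, μ = fun F => P F Set.univ) ∧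
    ∀ F ∈ 𝒜, ∀ B ∈ 𝒜L, B.Nonempty →
      π B * sInf {x | ∃ i, H i ⊆ B ∧ x = σ F i} ≤ μ (F ∩ B) ∧
      μ (F ∩ B) ≤ π B * sSup {x | ∃ i, H i ⊆ B ∧ x = σ F i}}

/-- The set `𝒫^fd` of fully ℒ-disintegrable conditional probabilities on `𝒜 × 𝒜L⁰`
extending `{π, σ}`. -/
def PfdSet {ι : Type*} (𝒜 𝒜L : Set (Set Ω)) (H : ι → Set Ω)
    (π : Set Ω → ℝ) (σ : Set Ω → ι → ℝ) : Set (Set Ω → Set Ω → ℝ) :=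
  {P | (∀ E ∈ 𝒜, ∀ K ∈ 𝒜L, K.Nonempty → P E K = P (E ∩ K) K) ∧
    (∀ K ∈ 𝒜L, K.Nonempty → IsFAP 𝒜 fun E => P E K) ∧
    (∀ E ∈ 𝒜, ∀ F ∈ 𝒜, ∀ K ∈ 𝒜L, K.Nonempty → E ∩ K ∈ 𝒜L → (E ∩ K).Nonempty →
      P (E ∩ F) K = P E K * P F (E ∩ K)) ∧
    (∀ B ∈ 𝒜L, P B Set.univ = π B) ∧ (∀ F ∈ 𝒜, ∀ i, P F (H i) = σ F i) ∧
    ∀ F ∈ 𝒜, ∀ K ∈ 𝒜L, K.Nonempty →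
      P F K = lowerSInt H 𝒜L (fun i => σ F i) fun B => P B K}

/-- The Choquet integral `C∫ X dφ = ∫₀¹ φ₊((X ≥ t)) dt` of a `[0,1]`-valued `X : ℒ → ℝ`
with respect to a capacity `φ` on `𝒜L`, where `φ₊` is the inner extension of `φ`. -/
noncomputable def choquetInt {ι : Type*} (H : ι → Set Ω) (𝒜L : Set (Set Ω))
    (X : ι → ℝ) (φ : Set Ω → ℝ) : ℝ :=
  ∫ t in (0 : ℝ)..(1 : ℝ),
    sSup {y | ∃ B ∈ 𝒜L, B ⊆ (⋃ i ∈ {i | t ≤ X i}, H i) ∧ y = φ B}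

/-!
A point of `𝒫^fd` is obtained by integrating the strategy against a full conditional extension
`ν` of the prior: `ν(·|K)` is `π` conditioned on `K` when `π K > 0`, and otherwise the point mass
at the first atom of `K` for a fixed well-order of `ℒ`; choosing the first atom makes `ν` obey the
chain rule. The disintegration conditions then reduce to properties of the lower Stieltjes
integral (integrals of simple functions, additivity for `𝒜L`-continuous integrands, and
`∫ 1_B X dν(·|K) = ν(B|K) ∫ X dν(·|B)`), all proved by passing to common refinements of finite
partitions.

For compactness, `𝒫^fd` is closed for pointwise convergence: every defining condition is an
equation or inequality between finitely many coordinates, except the disintegration equation,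
which for an `𝒜L`-continuous integrand says exactly that `P(F|K)` lies between all lower and all
upper Stieltjes sums. As all values lie in `[0,1]`, Tychonoff's theorem applies.
-/

section

variable {ι : Type*}

namespace IsSetField

variable {𝒜 : Set (Set Ω)} {A B : Set Ω}

theorem compl_mem (h : IsSetField 𝒜) (hA : A ∈ 𝒜) : Aᶜ ∈ 𝒜 := h.2.1 A hA

theorem union_mem (h : IsSetField 𝒜) (hA : A ∈ 𝒜) (hB : B ∈ 𝒜) : A ∪ B ∈ 𝒜 :=
  h.2.2 A hA B hB

theorem empty_mem (h : IsSetField 𝒜) : ∅ ∈ 𝒜 := by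
  simpa using h.compl_mem h.1

theorem inter_mem (h : IsSetField 𝒜) (hA : A ∈ 𝒜) (hB : B ∈ 𝒜) : A ∩ B ∈ 𝒜 := by
  simpa [compl_union] using h.compl_mem (h.union_mem (h.compl_mem hA) (h.compl_mem hB))

theorem diff_mem (h : IsSetField 𝒜) (hA : A ∈ 𝒜) (hB : B ∈ 𝒜) : A \ B ∈ 𝒜 :=
  h.inter_mem hA (h.compl_mem hB)

theorem biUnion_finset_mem {β : Type*} (h : IsSetField 𝒜) (s : Finset β) {f : β → Set Ω}
    (hf : ∀ b ∈ s, f b ∈ 𝒜) : (⋃ b ∈ s, f b) ∈ 𝒜 := by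
  induction s using Finset.induction_on with
  | empty => simpa using h.empty_mem
  | insert a s _ ih =>
    rw [Finset.set_biUnion_insert]
    exact h.union_mem (hf a (s.mem_insert_self a))
      (ih fun b hb => hf b (Finset.mem_insert_of_mem hb))

theorem biInter_finset_mem {β : Type*} (h : IsSetField 𝒜) (s : Finset β)
    {f : β → Set Ω} (hf : ∀ b ∈ s, f b ∈ 𝒜) : (⋂ b ∈ s, f b) ∈ 𝒜 := by
  simpa [compl_iUnion₂] using
    h.compl_mem (h.biUnion_finset_mem s fun b hb => h.compl_mem (hf b hb))

end IsSetField

namespace IsFAP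

variable {𝒜 𝒜' : Set (Set Ω)} {μ : Set Ω → ℝ} {A B : Set Ω}

theorem nonneg (h : IsFAP 𝒜 μ) (hA : A ∈ 𝒜) : 0 ≤ μ A := (h.1 A hA).1

theorem apply_univ (h : IsFAP 𝒜 μ) : μ univ = 1 := h.2.1

theorem apply_union (h : IsFAP 𝒜 μ) (hA : A ∈ 𝒜) (hB : B ∈ 𝒜) (hAB : Disjoint A B) :
    μ (A ∪ B) = μ A + μ B :=
  h.2.2 A hA B hB hAB

theorem restrict (h : IsFAP 𝒜 μ) (h𝒜 : 𝒜' ⊆ 𝒜) : IsFAP 𝒜' μ :=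
  ⟨fun A hA => h.1 A (h𝒜 hA), h.2.1, fun A hA B hB => h.2.2 A (h𝒜 hA) B (h𝒜 hB)⟩

theorem apply_empty (hF : IsSetField 𝒜) (h : IsFAP 𝒜 μ) : μ ∅ = 0 := by
  have := h.apply_union hF.empty_mem hF.empty_mem (disjoint_empty _)
  simp only [union_empty] at this
  linarith

theorem nonempty (hF : IsSetField 𝒜) (h : IsFAP 𝒜 μ) : Nonempty Ω := by
  by_contra hΩ
  have := h.apply_univ
  rw [univ_eq_empty_iff.2 (not_nonempty_iff.1 hΩ), h.apply_empty hF] at this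
  exact zero_ne_one this

theorem apply_diff_add (hF : IsSetField 𝒜) (h : IsFAP 𝒜 μ) (hA : A ∈ 𝒜) (hB : B ∈ 𝒜)
    (hAB : A ⊆ B) : μ (B \ A) + μ A = μ B := by
  rw [add_comm, ← h.apply_union hA (hF.diff_mem hB hA) disjoint_sdiff_right,
    union_sdiff_cancel hAB]

theorem mono (hF : IsSetField 𝒜) (h : IsFAP 𝒜 μ) (hA : A ∈ 𝒜) (hB : B ∈ 𝒜) (hAB : A ⊆ B) :
    μ A ≤ μ B := by
  linarith [h.apply_diff_add hF hA hB hAB, h.nonneg (hF.diff_mem hB hA)]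

theorem apply_compl (hF : IsSetField 𝒜) (h : IsFAP 𝒜 μ) (hA : A ∈ 𝒜) : μ Aᶜ = 1 - μ A := by
  have := h.apply_diff_add hF hA hF.1 (subset_univ A)
  rw [← compl_eq_univ_sdiff, h.apply_univ] at this
  linarith

theorem apply_eq_zero_of_subset (hF : IsSetField 𝒜) (h : IsFAP 𝒜 μ) (hA : A ∈ 𝒜) (hB : B ∈ 𝒜)
    (hAB : A ⊆ B) (hB0 : μ B = 0) : μ A = 0 :=
  le_antisymm (hB0 ▸ h.mono hF hA hB hAB) (h.nonneg hA)

theorem apply_biUnion_finset {β : Type*} (hF : IsSetField 𝒜) (h : IsFAP 𝒜 μ) (s : Finset β)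
    {f : β → Set Ω} (hf : ∀ b ∈ s, f b ∈ 𝒜) (hdisj : (s : Set β).PairwiseDisjoint f) :
    μ (⋃ b ∈ s, f b) = ∑ b ∈ s, μ (f b) := by
  induction s using Finset.induction_on with
  | empty => simpa using h.apply_empty hF
  | insert a s ha ih =>
    have hs : ∀ b ∈ s, f b ∈ 𝒜 := fun b hb => hf b (Finset.mem_insert_of_mem hb)
    rw [Finset.set_biUnion_insert, Finset.sum_insert ha,
      h.apply_union (hf a (s.mem_insert_self a)) (hF.biUnion_finset_mem s hs),
      ih hs (hdisj.subset (by simp))]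
    refine disjoint_iUnion₂_right.2 fun b hb => hdisj (by simp) (by simp [hb]) ?_
    rintro rfl
    exact ha hb

theorem cond {K : Set Ω} (hF : IsSetField 𝒜) (hμ : IsFAP 𝒜 μ) (hK : K ∈ 𝒜) (hpos : 0 < μ K) :
    IsFAP 𝒜 fun A => μ (A ∩ K) / μ K := by
  refine ⟨fun A hA => ⟨div_nonneg (hμ.nonneg (hF.inter_mem hA hK)) hpos.le, ?_⟩, ?_,
    fun A hA B hB hAB => ?_⟩
  · exact div_le_one_of_le₀ (hμ.mono hF (hF.inter_mem hA hK) hK inter_subset_right) hpos.le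
  · simp only [univ_inter, div_self hpos.ne']
  · simp only [union_inter_distrib_right, ← add_div]
    rw [hμ.apply_union (hF.inter_mem hA hK) (hF.inter_mem hB hK)
      (hAB.mono inter_subset_left inter_subset_left)]

theorem congr {ν : Set Ω → ℝ} (hF : IsSetField 𝒜) (hμ : IsFAP 𝒜 μ)
    (h : ∀ A ∈ 𝒜, ν A = μ A) : IsFAP 𝒜 ν := by
  refine ⟨fun A hA => h A hA ▸ hμ.1 A hA, h _ hF.1 ▸ hμ.2.1, fun A hA B hB hAB => ?_⟩
  rw [h _ (hF.union_mem hA hB), h A hA, h B hB, hμ.apply_union hA hB hAB]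

end IsFAP

namespace IsPartition

variable {H : ι → Set Ω}

theorem not_subset_of_disjoint (hH : IsPartition H) {i : ι} {B : Set Ω}
    (hd : Disjoint (H i) B) : ¬ H i ⊆ B := fun hs =>
  (hH.1 i).ne_empty (disjoint_self.1 (hd.mono_right hs))

theorem subset_biUnion_iff (hH : IsPartition H) (s : Set ι) (i : ι) :
    H i ⊆ ⋃ j ∈ s, H j ↔ i ∈ s := by
  refine ⟨fun h => ?_, fun h => subset_biUnion_of_mem h⟩
  by_contra hi
  refine hH.not_subset_of_disjoint (disjoint_iUnion₂_right.2 fun j hj => hH.2.1 ?_) h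
  rintro rfl
  exact hi hj

end IsPartition

namespace IsFieldOver

variable {H : ι → Set Ω} {𝒜L : Set (Set Ω)} {A B : Set Ω}

theorem subset_or_subset_compl (hH : IsPartition H) (hL : IsFieldOver H 𝒜L) (hA : A ∈ 𝒜L)
    (i : ι) : H i ⊆ A ∨ H i ⊆ Aᶜ := by
  obtain ⟨S, rfl⟩ := hL.2.2 A hA
  by_cases hi : i ∈ S
  · exact Or.inl (subset_biUnion_of_mem hi)
  · refine Or.inr (disjoint_iUnion₂_right.2 fun j hj => hH.2.1 ?_).subset_compl_right
    rintro rfl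
    exact hi hj

theorem exists_subset (hL : IsFieldOver H 𝒜L) (hA : A ∈ 𝒜L) (hne : A.Nonempty) :
    ∃ i, H i ⊆ A := by
  obtain ⟨S, rfl⟩ := hL.2.2 A hA
  obtain ⟨x, hx⟩ := hne
  obtain ⟨i, hi, -⟩ := mem_iUnion₂.1 hx
  exact ⟨i, subset_biUnion_of_mem hi⟩

theorem eq_empty_of_forall_not_subset (hL : IsFieldOver H 𝒜L) (hA : A ∈ 𝒜L)
    (h : ∀ i, ¬ H i ⊆ A) : A = ∅ := by
  by_contra hne
  obtain ⟨i, hi⟩ := hL.exists_subset hA (nonempty_iff_ne_empty.2 hne)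
  exact h i hi

theorem isFAP_atom (hH : IsPartition H) (hL : IsFieldOver H 𝒜L) (i : ι) :
    IsFAP 𝒜L fun A => if H i ⊆ A then 1 else 0 := by
  refine ⟨fun A _ => by dsimp only; split_ifs <;> norm_num, by simp, fun A hA B hB hAB => ?_⟩
  rcases hL.subset_or_subset_compl hH hA i with hiA | hiA
  · have hiB : ¬ H i ⊆ B := hH.not_subset_of_disjoint (hAB.mono_left hiA)
    simp [hiA, hiB, hiA.trans subset_union_left]
  · have hiAB : H i ⊆ A ∪ B ↔ H i ⊆ B := ⟨fun h x hx => (h hx).resolve_left (hiA hx),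
      fun h => h.trans subset_union_right⟩
    simp [hiAB, hH.not_subset_of_disjoint (disjoint_compl_left.mono_left hiA)]

end IsFieldOver

/-- `IsFinPart` without the requirement that the pieces be nonempty. -/
def IsFinCover (𝒜L : Set (Set Ω)) (T : Finset (Set Ω)) : Prop :=
  (↑T : Set (Set Ω)) ⊆ 𝒜L ∧ (↑T : Set (Set Ω)).PairwiseDisjoint id ∧ ⋃₀ (↑T : Set (Set Ω)) = univ

section Cover

variable {𝒜L : Set (Set Ω)} {T T' : Finset (Set Ω)} {A B : Set Ω}

theorem IsFinPart.isFinCover (hT : IsFinPart 𝒜L T) : IsFinCover 𝒜L T :=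
  ⟨hT.1, hT.2.2.1, hT.2.2.2⟩

theorem IsFinCover.exists_mem (hT : IsFinCover 𝒜L T) (x : Ω) : ∃ A ∈ T, x ∈ A := by
  have hx : x ∈ ⋃₀ (↑T : Set (Set Ω)) := hT.2.2 ▸ mem_univ x
  simpa using hx

theorem IsFinCover.filter_nonempty (hT : IsFinCover 𝒜L T) :
    IsFinPart 𝒜L (T.filter Set.Nonempty) := by
  refine ⟨fun A hA => hT.1 (Finset.mem_filter.1 hA).1, fun A hA => (Finset.mem_filter.1 hA).2,
    fun A hA B hB => hT.2.1 (Finset.mem_filter.1 hA).1 (Finset.mem_filter.1 hB).1, ?_⟩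
  refine eq_univ_of_forall fun x => ?_
  obtain ⟨A, hA, hx⟩ := hT.exists_mem x
  exact mem_sUnion.2 ⟨A, Finset.mem_filter.2 ⟨hA, x, hx⟩, hx⟩

theorem isFinCover_singleton_univ (hF : IsSetField 𝒜L) : IsFinCover 𝒜L {univ} :=
  ⟨by simpa using hF.1, by simp, by simp⟩

theorem isFinCover_pair (hF : IsSetField 𝒜L) (hB : B ∈ 𝒜L) : IsFinCover 𝒜L {B, Bᶜ} := by
  refine ⟨?_, ?_, by simp⟩
  · simpa [insert_subset_iff] using ⟨hB, hF.compl_mem hB⟩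
  · simpa [PairwiseDisjoint, Set.pairwise_insert, Function.onFun] using
      fun _ => ⟨disjoint_compl_right, disjoint_compl_left⟩

theorem IsFinCover.sum_inter {μ : Set Ω → ℝ} (hF : IsSetField 𝒜L) (hμ : IsFAP 𝒜L μ)
    (hT : IsFinCover 𝒜L T) (hA : A ∈ 𝒜L) : ∑ B ∈ T, μ (A ∩ B) = μ A := by
  rw [← hμ.apply_biUnion_finset hF T (fun B hB => hF.inter_mem hA (hT.1 hB))
    (hT.2.1.mono fun B => inter_subset_right), ← inter_iUnion₂]
  simp only [Finset.mem_coe.symm, ← sUnion_eq_biUnion, hT.2.2, inter_univ]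

theorem IsFinCover.sum_eq_one {μ : Set Ω → ℝ} (hF : IsSetField 𝒜L) (hμ : IsFAP 𝒜L μ)
    (hT : IsFinCover 𝒜L T) : ∑ B ∈ T, μ B = 1 := by
  simpa [hμ.apply_univ] using hT.sum_inter hF hμ hF.1

noncomputable def refinement (T T' : Finset (Set Ω)) : Finset (Set Ω) :=
  ((T ×ˢ T').filter fun p => (p.1 ∩ p.2).Nonempty).image fun p => p.1 ∩ p.2

theorem mem_refinement {C : Set Ω} :
    C ∈ refinement T T' ↔ ∃ A ∈ T, ∃ B ∈ T', A ∩ B = C ∧ C.Nonempty := by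
  simp only [refinement, Finset.mem_image, Finset.mem_filter, Finset.mem_product, Prod.exists]
  constructor
  · rintro ⟨A, B, ⟨⟨hA, hB⟩, hne⟩, rfl⟩
    exact ⟨A, hA, B, hB, rfl, hne⟩
  · rintro ⟨A, hA, B, hB, rfl, hne⟩
    exact ⟨A, B, ⟨⟨hA, hB⟩, hne⟩, rfl⟩

theorem refinement_comm (T T' : Finset (Set Ω)) : refinement T T' = refinement T' T := by
  ext C
  simp only [mem_refinement]
  constructor <;> rintro ⟨A, hA, B, hB, rfl, hne⟩ <;> exact ⟨B, hB, A, hA, inter_comm _ _, hne⟩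

theorem IsFinCover.isFinPart_refinement (hF : IsSetField 𝒜L) (hT : IsFinCover 𝒜L T)
    (hT' : IsFinCover 𝒜L T') : IsFinPart 𝒜L (refinement T T') := by
  refine ⟨?_, ?_, ?_, ?_⟩
  · rintro C hC
    obtain ⟨A, hA, B, hB, rfl, -⟩ := mem_refinement.1 hC
    exact hF.inter_mem (hT.1 hA) (hT'.1 hB)
  · intro C hC
    obtain ⟨A, -, B, -, rfl, hne⟩ := mem_refinement.1 hC
    exact hne
  · intro C hC D hD hCD
    obtain ⟨A, hA, B, hB, rfl, -⟩ := mem_refinement.1 hC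
    obtain ⟨A', hA', B', hB', rfl, -⟩ := mem_refinement.1 hD
    by_cases hAA' : A = A'
    · subst hAA'
      have hBB' : B ≠ B' := by rintro rfl; exact hCD rfl
      exact (hT'.2.1 hB hB' hBB').mono inter_subset_right inter_subset_right
    · exact (hT.2.1 hA hA' hAA').mono inter_subset_left inter_subset_left
  · refine eq_univ_of_forall fun x => ?_
    obtain ⟨A, hA, hxA⟩ := hT.exists_mem x
    obtain ⟨B, hB, hxB⟩ := hT'.exists_mem x
    exact mem_sUnion.2 ⟨A ∩ B, mem_refinement.2 ⟨A, hA, B, hB, rfl, x, hxA, hxB⟩, hxA, hxB⟩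

theorem sum_refinement (hT : (↑T : Set (Set Ω)).PairwiseDisjoint id)
    (hT' : (↑T' : Set (Set Ω)).PairwiseDisjoint id) (g : Set Ω → ℝ) (hg : g ∅ = 0) :
    ∑ C ∈ refinement T T', g C = ∑ A ∈ T, ∑ B ∈ T', g (A ∩ B) := by
  rw [refinement, Finset.sum_image, Finset.sum_filter_of_ne, Finset.sum_product]
  · intro p _ hp
    by_contra hempty
    rw [not_nonempty_iff_eq_empty.1 hempty] at hp
    exact hp hg
  · simp only [Finset.coe_filter, Finset.mem_product]
    rintro ⟨A, B⟩ ⟨⟨hA, hB⟩, x, hxA, hxB⟩ ⟨A', B'⟩ ⟨⟨hA', hB'⟩, -⟩ (h : A ∩ B = A' ∩ B')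
    dsimp only at hA hB hA' hB' hxA hxB
    have hx : x ∈ A' ∩ B' := h ▸ ⟨hxA, hxB⟩
    rw [hT.elim_set hA hA' x hxA hx.1, hT'.elim_set hB hB' x hxB hx.2]

end Cover

def atomValues (H : ι → Set Ω) (X : ι → ℝ) (A : Set Ω) : Set ℝ :=
  {y | ∃ i, H i ⊆ A ∧ y = X i}

noncomputable def lowerSum (H : ι → Set Ω) (X : ι → ℝ) (μ : Set Ω → ℝ) (T : Finset (Set Ω)) :
    ℝ :=
  ∑ A ∈ T, sInf (atomValues H X A) * μ A

noncomputable def upperSum (H : ι → Set Ω) (X : ι → ℝ) (μ : Set Ω → ℝ) (T : Finset (Set Ω)) :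
    ℝ :=
  ∑ A ∈ T, sSup (atomValues H X A) * μ A

section StieltjesSums

variable {H : ι → Set Ω} {𝒜L : Set (Set Ω)} {X Y : ι → ℝ} {μ : Set Ω → ℝ}
  {T T' : Finset (Set Ω)} {A B : Set Ω} {c : ℝ}

theorem lowerSInt_eq_sSup_lowerSum :
    lowerSInt H 𝒜L X μ = sSup {x | ∃ T, IsFinPart 𝒜L T ∧ x = lowerSum H X μ T} :=
  rfl

theorem atomValues_mono (h : A ⊆ B) : atomValues H X A ⊆ atomValues H X B :=
  fun _ ⟨i, hi, hy⟩ => ⟨i, hi.trans h, hy⟩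

theorem atomValues_congr (h : ∀ i, H i ⊆ A → X i = Y i) : atomValues H X A = atomValues H Y A := by
  ext y
  constructor <;> rintro ⟨i, hi, rfl⟩ <;> exact ⟨i, hi, by simp [h i hi]⟩

theorem atomValues_nonempty (hL : IsFieldOver H 𝒜L) (hA : A ∈ 𝒜L) (hne : A.Nonempty) :
    (atomValues H X A).Nonempty :=
  let ⟨i, hi⟩ := hL.exists_subset hA hne
  ⟨X i, i, hi, rfl⟩

theorem atomValues_eq_singleton (hL : IsFieldOver H 𝒜L) (hA : A ∈ 𝒜L) (hne : A.Nonempty)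
    (h : ∀ i, H i ⊆ A → X i = c) : atomValues H X A = {c} := by
  refine (eq_singleton_iff_nonempty_unique_mem.2 ⟨atomValues_nonempty hL hA hne, ?_⟩)
  rintro y ⟨i, hi, rfl⟩
  exact h i hi

theorem lowerSInt_le_of_forall (hL : IsFieldOver H 𝒜L)
    (h : ∀ T, IsFinPart 𝒜L T → lowerSum H X μ T ≤ c) : lowerSInt H 𝒜L X μ ≤ c := by
  have hU := isFinCover_singleton_univ hL.1
  refine csSup_le ⟨_, _, hU.isFinPart_refinement hL.1 hU, rfl⟩ ?_
  rintro _ ⟨T, hT, rfl⟩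
  exact h T hT

variable (hX : ∀ i, X i ∈ Icc (0 : ℝ) 1)
include hX

theorem atomValues_subset_Icc : atomValues H X A ⊆ Icc 0 1 := by
  rintro y ⟨i, -, rfl⟩
  exact hX i

theorem bddBelow_atomValues : BddBelow (atomValues H X A) :=
  (bddBelow_Icc).mono (atomValues_subset_Icc hX)

theorem bddAbove_atomValues : BddAbove (atomValues H X A) :=
  (bddAbove_Icc).mono (atomValues_subset_Icc hX)

theorem sInf_atomValues_nonneg : 0 ≤ sInf (atomValues H X A) :=
  Real.sInf_nonneg fun _ hy => (atomValues_subset_Icc hX hy).1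

theorem sSup_atomValues_le_one : sSup (atomValues H X A) ≤ 1 :=
  Real.sSup_le (fun _ hy => (atomValues_subset_Icc hX hy).2) zero_le_one

theorem sInf_atomValues_le_sSup : sInf (atomValues H X A) ≤ sSup (atomValues H X A) :=
  Real.sInf_le_sSup _ (bddBelow_atomValues hX) (bddAbove_atomValues hX)

theorem sInf_atomValues_le_of_subset (hL : IsFieldOver H 𝒜L) (hA : A ∈ 𝒜L)
    (hne : A.Nonempty) (hAB : A ⊆ B) : sInf (atomValues H X B) ≤ sInf (atomValues H X A) :=
  csInf_le_csInf (bddBelow_atomValues hX) (atomValues_nonempty hL hA hne) (atomValues_mono hAB)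

theorem sSup_atomValues_le_of_subset (hL : IsFieldOver H 𝒜L) (hA : A ∈ 𝒜L)
    (hne : A.Nonempty) (hAB : A ⊆ B) : sSup (atomValues H X A) ≤ sSup (atomValues H X B) :=
  csSup_le_csSup (bddAbove_atomValues hX) (atomValues_nonempty hL hA hne) (atomValues_mono hAB)

variable (hμ : IsFAP 𝒜L μ)
include hμ

theorem lowerSum_le_upperSum (hT : ↑T ⊆ 𝒜L) : lowerSum H X μ T ≤ upperSum H X μ T :=
  Finset.sum_le_sum fun _ hA =>
    mul_le_mul_of_nonneg_right (sInf_atomValues_le_sSup hX) (hμ.nonneg (hT hA))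

theorem upperSum_le_one (hF : IsSetField 𝒜L) (hT : IsFinCover 𝒜L T) : upperSum H X μ T ≤ 1 :=
  calc upperSum H X μ T ≤ ∑ A ∈ T, μ A :=
        Finset.sum_le_sum fun _ hA =>
          mul_le_of_le_one_left (hμ.nonneg (hT.1 hA)) (sSup_atomValues_le_one hX)
    _ = 1 := hT.sum_eq_one hF hμ

theorem lowerSum_nonneg (hT : ↑T ⊆ 𝒜L) : 0 ≤ lowerSum H X μ T :=
  Finset.sum_nonneg fun _ hA => mul_nonneg (sInf_atomValues_nonneg hX) (hμ.nonneg (hT hA))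

theorem lowerSum_le_lowerSum_refinement (hL : IsFieldOver H 𝒜L) (hT : IsFinCover 𝒜L T)
    (hT' : IsFinCover 𝒜L T') : lowerSum H X μ T ≤ lowerSum H X μ (refinement T T') := by
  have hμ0 := hμ.apply_empty hL.1
  rw [lowerSum, lowerSum, sum_refinement hT.2.1 hT'.2.1 _ (by simp [hμ0])]
  refine Finset.sum_le_sum fun A hA => ?_
  rw [← hT'.sum_inter hL.1 hμ (hT.1 hA), Finset.mul_sum]
  refine Finset.sum_le_sum fun B hB => ?_
  have hAB := hL.1.inter_mem (hT.1 hA) (hT'.1 hB)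
  rcases (A ∩ B).eq_empty_or_nonempty with hempty | hne
  · simp [hempty, hμ0]
  · exact mul_le_mul_of_nonneg_right
      (sInf_atomValues_le_of_subset hX hL hAB hne inter_subset_left) (hμ.nonneg hAB)

theorem upperSum_refinement_le_upperSum (hL : IsFieldOver H 𝒜L) (hT : IsFinCover 𝒜L T)
    (hT' : IsFinCover 𝒜L T') : upperSum H X μ (refinement T T') ≤ upperSum H X μ T := by
  have hμ0 := hμ.apply_empty hL.1
  rw [upperSum, upperSum, sum_refinement hT.2.1 hT'.2.1 _ (by simp [hμ0])]
  refine Finset.sum_le_sum fun A hA => ?_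
  rw [← hT'.sum_inter hL.1 hμ (hT.1 hA), Finset.mul_sum]
  refine Finset.sum_le_sum fun B hB => ?_
  have hAB := hL.1.inter_mem (hT.1 hA) (hT'.1 hB)
  rcases (A ∩ B).eq_empty_or_nonempty with hempty | hne
  · simp [hempty, hμ0]
  · exact mul_le_mul_of_nonneg_right
      (sSup_atomValues_le_of_subset hX hL hAB hne inter_subset_left) (hμ.nonneg hAB)

theorem lowerSum_le_upperSum_of_isFinCover (hL : IsFieldOver H 𝒜L) (hT : IsFinCover 𝒜L T)
    (hT' : IsFinCover 𝒜L T') : lowerSum H X μ T ≤ upperSum H X μ T' :=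
  calc lowerSum H X μ T ≤ lowerSum H X μ (refinement T T') :=
        lowerSum_le_lowerSum_refinement hX hμ hL hT hT'
    _ ≤ upperSum H X μ (refinement T T') :=
        lowerSum_le_upperSum hX hμ (hT.isFinPart_refinement hL.1 hT').1
    _ ≤ upperSum H X μ T' := by
        rw [refinement_comm]
        exact upperSum_refinement_le_upperSum hX hμ hL hT' hT

theorem lowerSum_le_lowerSInt (hL : IsFieldOver H 𝒜L) (hT : IsFinCover 𝒜L T) :
    lowerSum H X μ T ≤ lowerSInt H 𝒜L X μ := by
  have hU := isFinCover_singleton_univ hL.1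
  refine (lowerSum_le_lowerSum_refinement hX hμ hL hT hU).trans (le_csSup ⟨1, ?_⟩
    ⟨_, hT.isFinPart_refinement hL.1 hU, rfl⟩)
  rintro _ ⟨T', hT', rfl⟩
  exact (lowerSum_le_upperSum_of_isFinCover hX hμ hL hT'.isFinCover hU).trans
    (upperSum_le_one hX hμ hL.1 hU)

theorem lowerSInt_le_upperSum (hL : IsFieldOver H 𝒜L) (hT : IsFinCover 𝒜L T) :
    lowerSInt H 𝒜L X μ ≤ upperSum H X μ T :=
  lowerSInt_le_of_forall hL fun _ hT' =>
    lowerSum_le_upperSum_of_isFinCover hX hμ hL hT'.isFinCover hT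

theorem lowerSInt_nonneg (hL : IsFieldOver H 𝒜L) : 0 ≤ lowerSInt H 𝒜L X μ :=
  (lowerSum_nonneg hX hμ (isFinCover_singleton_univ hL.1).1).trans
    (lowerSum_le_lowerSInt hX hμ hL (isFinCover_singleton_univ hL.1))

theorem lowerSInt_le_one (hL : IsFieldOver H 𝒜L) : lowerSInt H 𝒜L X μ ≤ 1 :=
  (lowerSInt_le_upperSum hX hμ hL (isFinCover_singleton_univ hL.1)).trans
    (upperSum_le_one hX hμ hL.1 (isFinCover_singleton_univ hL.1))

end StieltjesSums

theorem sSup_le_sInf_add_of_forall_mem_Icc {S : Set ℝ} {a w : ℝ} (hne : S.Nonempty)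
    (h : ∀ y ∈ S, y ∈ Icc a (a + w)) : sSup S ≤ sInf S + w :=
  csSup_le hne fun y hy => by
    linarith [(h y hy).2, le_csInf hne fun z hz => (h z hz).1]

section Oscillation

variable {H : ι → Set Ω} {𝒜L : Set (Set Ω)} {X : ι → ℝ}

theorem ALContinuous.exists_antitone_approx (hc : ALContinuous H 𝒜L X) (hH : IsPartition H)
    (hF : IsSetField 𝒜L) {δ : ℝ} (hδ : 0 < δ) :
    ∃ B : ℕ → Set Ω, Antitone B ∧ (∀ k, B k ∈ 𝒜L) ∧ B 0 = univ ∧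
      (∀ (k : ℕ) i, H i ⊆ B (k + 1) → k * δ ≤ X i) ∧
        (∀ (k : ℕ) i, k * δ + δ ≤ X i → H i ⊆ B (k + 1)) := by
  choose A hA hA_sup hA_sub using fun k : ℕ => hc.2 (k * δ) δ hδ
  refine ⟨fun k => ⋂ j ∈ Finset.range k, A j, fun k l hkl => ?_, fun k => ?_, by simp, ?_, ?_⟩
  · exact biInter_subset_biInter_left (by simpa using hkl)
  · exact hF.biInter_finset_mem _ fun j _ => hA j
  · intro k i hi
    have := (hi.trans (biInter_subset_of_mem (by simp : k ∈ Finset.range (k + 1)))).trans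
      (hA_sub k)
    exact (hH.subset_biUnion_iff _ i).1 this
  · intro k i hi
    refine subset_iInter₂ fun j hj => (subset_biUnion_of_mem (u := H) ?_).trans (hA_sup j)
    have : (j : ℝ) ≤ k := mod_cast Nat.lt_succ_iff.1 (Finset.mem_range.1 hj)
    show (j : ℝ) * δ + δ ≤ X i
    nlinarith

theorem isFinCover_telescope {𝒜L : Set (Set Ω)} {B : ℕ → Set Ω} (hF : IsSetField 𝒜L)
    (hB : Antitone B) (hmem : ∀ k, B k ∈ 𝒜L) (h0 : B 0 = univ) {n : ℕ} (hn : B (n + 1) = ∅) :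
    IsFinCover 𝒜L ((Finset.range (n + 1)).image fun k => B k \ B (k + 1)) := by
  have hdisj : ∀ j k, j < k → Disjoint (B j \ B (j + 1)) (B k \ B (k + 1)) := fun j k hjk =>
    disjoint_sdiff_left.mono_right (sdiff_subset.trans (hB (Nat.succ_le_of_lt hjk)))
  refine ⟨?_, ?_, ?_⟩
  · simp only [Finset.coe_image, image_subset_iff]
    exact fun k _ => hF.diff_mem (hmem k) (hmem (k + 1))
  · simp only [Finset.coe_image]
    rintro _ ⟨j, -, rfl⟩ _ ⟨k, -, rfl⟩ hne
    rcases lt_trichotomy j k with hjk | rfl | hkj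
    · exact hdisj j k hjk
    · exact absurd rfl hne
    · exact (hdisj k j hkj).symm
  · refine eq_univ_of_forall fun x => ?_
    have hex : ∃ k, x ∉ B (k + 1) := ⟨n, by simp [hn]⟩
    refine mem_sUnion.2 ⟨_, Finset.mem_image_of_mem _ (Finset.mem_range.2
      (Nat.lt_succ_of_le (Nat.find_min' hex (by simp [hn])))), ?_, Nat.find_spec hex⟩
    rcases h : Nat.find hex with _ | m
    · simp [h0]
    · simpa using Nat.find_min hex (h ▸ Nat.lt_succ_self m)

theorem ALContinuous.exists_isFinPart_oscillation_le (hc : ALContinuous H 𝒜L X)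
    (hH : IsPartition H) (hL : IsFieldOver H 𝒜L) (hX : ∀ i, X i ∈ Icc (0 : ℝ) 1) {ε : ℝ}
    (hε : 0 < ε) : ∃ T, IsFinPart 𝒜L T ∧
      ∀ A ∈ T, sSup (atomValues H X A) ≤ sInf (atomValues H X A) + ε := by
  obtain ⟨n, hn⟩ := exists_nat_gt (2 / ε)
  have hδ : 0 < ε / 2 := half_pos hε
  have hnδ : 1 < n * (ε / 2) := by
    rw [div_lt_iff₀ hε] at hn
    linarith
  obtain ⟨B, hanti, hmem, h0, hlow, hhigh⟩ := hc.exists_antitone_approx hH hL.1 hδ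
  have hBn : B (n + 1) = ∅ := hL.eq_empty_of_forall_not_subset (hmem _) fun i hi => by
    linarith [hlow n i hi, (hX i).2]
  refine ⟨_, (isFinCover_telescope hL.1 hanti hmem h0 hBn).filter_nonempty, fun A hA => ?_⟩
  obtain ⟨⟨k, -, rfl⟩, hne⟩ : (∃ k < n + 1, B k \ B (k + 1) = A) ∧ A.Nonempty := by
    simpa using hA
  refine sSup_le_sInf_add_of_forall_mem_Icc (a := k * (ε / 2) - ε / 2)
    (atomValues_nonempty hL (hL.1.diff_mem (hmem k) (hmem (k + 1))) hne) ?_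
  rintro _ ⟨i, hi, rfl⟩
  constructor
  · rcases k with _ | m
    · linarith [(hX i).1]
    · have := hlow m i (hi.trans sdiff_subset)
      push_cast
      linarith
  · by_contra hlt
    refine hH.not_subset_of_disjoint (disjoint_sdiff_left.mono_left hi)
      (hhigh k i (by linarith))

end Oscillation

section Integral

variable {H : ι → Set Ω} {𝒜L : Set (Set Ω)} {X Y : ι → ℝ} {μ ν : Set Ω → ℝ}
  {T : Finset (Set Ω)} {A B : Set Ω} {c : ℝ}

theorem upperSum_le_lowerSum_add (hF : IsSetField 𝒜L) (hμ : IsFAP 𝒜L μ) (hT : IsFinPart 𝒜L T)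
    {ε : ℝ} (hosc : ∀ A ∈ T, sSup (atomValues H X A) ≤ sInf (atomValues H X A) + ε) :
    upperSum H X μ T ≤ lowerSum H X μ T + ε :=
  calc upperSum H X μ T ≤ ∑ A ∈ T, (sInf (atomValues H X A) + ε) * μ A :=
        Finset.sum_le_sum fun A hA => mul_le_mul_of_nonneg_right (hosc A hA) (hμ.nonneg (hT.1 hA))
    _ = lowerSum H X μ T + ε := by
        simp only [add_mul, Finset.sum_add_distrib, ← Finset.mul_sum,
          hT.isFinCover.sum_eq_one hF hμ, mul_one, lowerSum]

theorem ALContinuous.exists_upperSum_le_lowerSum_add (hc : ALContinuous H 𝒜L X)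
    (hH : IsPartition H) (hL : IsFieldOver H 𝒜L) (hX : ∀ i, X i ∈ Icc (0 : ℝ) 1)
    (hμ : IsFAP 𝒜L μ) {ε : ℝ} (hε : 0 < ε) :
    ∃ T, IsFinPart 𝒜L T ∧ upperSum H X μ T ≤ lowerSum H X μ T + ε :=
  let ⟨T, hT, hosc⟩ := hc.exists_isFinPart_oscillation_le hH hL hX hε
  ⟨T, hT, upperSum_le_lowerSum_add hL.1 hμ hT hosc⟩

theorem ALContinuous.eq_lowerSInt_iff (hc : ALContinuous H 𝒜L X) (hH : IsPartition H)
    (hL : IsFieldOver H 𝒜L) (hX : ∀ i, X i ∈ Icc (0 : ℝ) 1) (hμ : IsFAP 𝒜L μ) :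
    c = lowerSInt H 𝒜L X μ ↔
      ∀ T, IsFinPart 𝒜L T → lowerSum H X μ T ≤ c ∧ c ≤ upperSum H X μ T := by
  refine ⟨?_, fun h => le_antisymm ?_ (lowerSInt_le_of_forall hL fun T hT => (h T hT).1)⟩
  · rintro rfl T hT
    exact ⟨lowerSum_le_lowerSInt hX hμ hL hT.isFinCover,
      lowerSInt_le_upperSum hX hμ hL hT.isFinCover⟩
  · refine le_of_forall_pos_le_add fun ε hε => ?_
    obtain ⟨T, hT, hTε⟩ := hc.exists_upperSum_le_lowerSum_add hH hL hX hμ hε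
    linarith [(h T hT).2, lowerSum_le_lowerSInt hX hμ hL hT.isFinCover]

theorem lowerSum_add_lowerSum_le (hL : IsFieldOver H 𝒜L) (hX : ∀ i, X i ∈ Icc (0 : ℝ) 1)
    (hY : ∀ i, Y i ∈ Icc (0 : ℝ) 1) (hμ : IsFAP 𝒜L μ) (hT : IsFinPart 𝒜L T) :
    lowerSum H X μ T + lowerSum H Y μ T ≤ lowerSum H (fun i => X i + Y i) μ T := by
  rw [lowerSum, lowerSum, lowerSum, ← Finset.sum_add_distrib]
  refine Finset.sum_le_sum fun A hA => ?_
  rw [← add_mul]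
  refine mul_le_mul_of_nonneg_right
    (le_csInf (atomValues_nonempty hL (hT.1 hA) (hT.2.1 A hA)) ?_) (hμ.nonneg (hT.1 hA))
  rintro _ ⟨i, hi, rfl⟩
  exact add_le_add (csInf_le (bddBelow_atomValues hX) ⟨i, hi, rfl⟩)
    (csInf_le (bddBelow_atomValues hY) ⟨i, hi, rfl⟩)

theorem upperSum_add_le (hL : IsFieldOver H 𝒜L) (hX : ∀ i, X i ∈ Icc (0 : ℝ) 1)
    (hY : ∀ i, Y i ∈ Icc (0 : ℝ) 1) (hμ : IsFAP 𝒜L μ) (hT : IsFinPart 𝒜L T) :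
    upperSum H (fun i => X i + Y i) μ T ≤ upperSum H X μ T + upperSum H Y μ T := by
  rw [upperSum, upperSum, upperSum, ← Finset.sum_add_distrib]
  refine Finset.sum_le_sum fun A hA => ?_
  rw [← add_mul]
  refine mul_le_mul_of_nonneg_right
    (csSup_le (atomValues_nonempty hL (hT.1 hA) (hT.2.1 A hA)) ?_) (hμ.nonneg (hT.1 hA))
  rintro _ ⟨i, hi, rfl⟩
  exact add_le_add (le_csSup (bddAbove_atomValues hX) ⟨i, hi, rfl⟩)
    (le_csSup (bddAbove_atomValues hY) ⟨i, hi, rfl⟩)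

theorem lowerSInt_add (hH : IsPartition H) (hL : IsFieldOver H 𝒜L)
    (hX : ∀ i, X i ∈ Icc (0 : ℝ) 1) (hY : ∀ i, Y i ∈ Icc (0 : ℝ) 1)
    (hXY : ∀ i, X i + Y i ∈ Icc (0 : ℝ) 1) (hcX : ALContinuous H 𝒜L X)
    (hcY : ALContinuous H 𝒜L Y) (hμ : IsFAP 𝒜L μ) :
    lowerSInt H 𝒜L (fun i => X i + Y i) μ = lowerSInt H 𝒜L X μ + lowerSInt H 𝒜L Y μ := by
  refine eq_of_forall_dist_le fun ε hε => ?_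
  obtain ⟨T₁, hT₁, hX₁⟩ := hcX.exists_upperSum_le_lowerSum_add hH hL hX hμ (half_pos hε)
  obtain ⟨T₂, hT₂, hY₂⟩ := hcY.exists_upperSum_le_lowerSum_add hH hL hY hμ (half_pos hε)
  have hR := hT₁.isFinCover.isFinPart_refinement hL.1 hT₂.isFinCover
  have hXR := lowerSum_le_lowerSum_refinement hX hμ hL hT₁.isFinCover hT₂.isFinCover
  have hXR' := upperSum_refinement_le_upperSum hX hμ hL hT₁.isFinCover hT₂.isFinCover
  have hYR := lowerSum_le_lowerSum_refinement hY hμ hL hT₂.isFinCover hT₁.isFinCover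
  have hYR' := upperSum_refinement_le_upperSum hY hμ hL hT₂.isFinCover hT₁.isFinCover
  rw [refinement_comm] at hYR hYR'
  have hsum := lowerSum_add_lowerSum_le hL hX hY hμ hR
  have hsum' := upperSum_add_le hL hX hY hμ hR
  -- both sides lie between the lower and the upper sums on the common refinement of `T₁`, `T₂`
  rw [Real.dist_eq, abs_le]
  constructor <;> linarith [lowerSum_le_lowerSInt hXY hμ hL hR.isFinCover,
    lowerSInt_le_upperSum hXY hμ hL hR.isFinCover, lowerSInt_le_upperSum hX hμ hL hT₁.isFinCover,
    lowerSInt_le_upperSum hY hμ hL hT₂.isFinCover, lowerSum_le_lowerSInt hX hμ hL hT₁.isFinCover,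
    lowerSum_le_lowerSInt hY hμ hL hT₂.isFinCover]

theorem lowerSInt_congr_measure (h : ∀ A ∈ 𝒜L, μ A = ν A) :
    lowerSInt H 𝒜L X μ = lowerSInt H 𝒜L X ν := by
  have hsum : ∀ T, IsFinPart 𝒜L T → lowerSum H X μ T = lowerSum H X ν T := fun T hT =>
    Finset.sum_congr rfl fun A hA => by rw [h A (hT.1 hA)]
  simp only [lowerSInt_eq_sSup_lowerSum]
  congr 1
  ext x
  constructor <;> rintro ⟨T, hT, rfl⟩ <;> exact ⟨T, hT, by rw [hsum T hT]⟩

theorem sInf_atomValues_mul_eq (hL : IsFieldOver H 𝒜L) (hμ : IsFAP 𝒜L μ) (hA : A ∈ 𝒜L)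
    (h : ∀ i, H i ⊆ A → X i = c) : sInf (atomValues H X A) * μ A = c * μ A := by
  rcases A.eq_empty_or_nonempty with rfl | hne
  · simp [hμ.apply_empty hL.1]
  · rw [atomValues_eq_singleton hL hA hne h, csInf_singleton]

theorem sSup_atomValues_mul_eq (hL : IsFieldOver H 𝒜L) (hμ : IsFAP 𝒜L μ) (hA : A ∈ 𝒜L)
    (h : ∀ i, H i ⊆ A → X i = c) : sSup (atomValues H X A) * μ A = c * μ A := by
  rcases A.eq_empty_or_nonempty with rfl | hne
  · simp [hμ.apply_empty hL.1]
  · rw [atomValues_eq_singleton hL hA hne h, csSup_singleton]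

theorem lowerSInt_eq_sum_of_forall_eq (hL : IsFieldOver H 𝒜L) (hX : ∀ i, X i ∈ Icc (0 : ℝ) 1)
    (hμ : IsFAP 𝒜L μ) (hT : IsFinCover 𝒜L T) (f : Set Ω → ℝ)
    (hf : ∀ A ∈ T, ∀ i, H i ⊆ A → X i = f A) : lowerSInt H 𝒜L X μ = ∑ A ∈ T, f A * μ A := by
  have hlow : lowerSum H X μ T = ∑ A ∈ T, f A * μ A :=
    Finset.sum_congr rfl fun A hA => sInf_atomValues_mul_eq hL hμ (hT.1 hA) (hf A hA)
  have hup : upperSum H X μ T = ∑ A ∈ T, f A * μ A :=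
    Finset.sum_congr rfl fun A hA => sSup_atomValues_mul_eq hL hμ (hT.1 hA) (hf A hA)
  exact le_antisymm (hup ▸ lowerSInt_le_upperSum hX hμ hL hT)
    (hlow ▸ lowerSum_le_lowerSInt hX hμ hL hT)

theorem lowerSInt_const (hL : IsFieldOver H 𝒜L) (hμ : IsFAP 𝒜L μ) (hc : c ∈ Icc (0 : ℝ) 1) :
    lowerSInt H 𝒜L (fun _ => c) μ = c := by
  rw [lowerSInt_eq_sum_of_forall_eq hL (fun _ => hc) hμ (isFinCover_singleton_univ hL.1)
    (fun _ => c) fun _ _ _ _ => rfl]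
  simp [hμ.apply_univ]

theorem lowerSInt_indicator (hL : IsFieldOver H 𝒜L) (hX : ∀ i, X i ∈ Icc (0 : ℝ) 1)
    (hμ : IsFAP 𝒜L μ) (hB : B ∈ 𝒜L) (h1 : ∀ i, H i ⊆ B → X i = 1)
    (h0 : ∀ i, H i ⊆ Bᶜ → X i = 0) : lowerSInt H 𝒜L X μ = μ B := by
  have := hμ.nonempty hL.1
  have hBB : B ≠ Bᶜ := ne_compl_self
  rw [lowerSInt_eq_sum_of_forall_eq hL hX hμ (isFinCover_pair hL.1 hB)
    (fun A => if A = B then 1 else 0), Finset.sum_pair hBB]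
  · simp [hBB.symm]
  · intro A hA i hi
    rcases Finset.mem_insert.1 hA with rfl | hA
    · simp [h1 i hi]
    · rw [Finset.mem_singleton.1 hA] at hi ⊢
      simp [hBB.symm, h0 i hi]

theorem subset_or_subset_compl_of_mem_refinement {C : Set Ω} (hC : C ∈ refinement T {B, Bᶜ}) :
    C ⊆ B ∨ C ⊆ Bᶜ := by
  obtain ⟨A, -, B', hB', rfl, -⟩ := mem_refinement.1 hC
  rcases Finset.mem_insert.1 hB' with rfl | hB'
  · exact Or.inl inter_subset_right
  · exact Or.inr ((Finset.mem_singleton.1 hB') ▸ inter_subset_right)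

theorem lowerSInt_le_of_forall_refining (hL : IsFieldOver H 𝒜L)
    (hX : ∀ i, X i ∈ Icc (0 : ℝ) 1) (hμ : IsFAP 𝒜L μ) (hB : B ∈ 𝒜L)
    (h : ∀ R, IsFinPart 𝒜L R → (∀ C ∈ R, C ⊆ B ∨ C ⊆ Bᶜ) → lowerSum H X μ R ≤ c) :
    lowerSInt H 𝒜L X μ ≤ c :=
  lowerSInt_le_of_forall hL fun _ hT =>
    (lowerSum_le_lowerSum_refinement hX hμ hL hT.isFinCover (isFinCover_pair hL.1 hB)).trans
      (h _ (hT.isFinCover.isFinPart_refinement hL.1 (isFinCover_pair hL.1 hB))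
        fun _ => subset_or_subset_compl_of_mem_refinement)

theorem lowerSInt_le_of_eqOn (hL : IsFieldOver H 𝒜L) (hX : ∀ i, X i ∈ Icc (0 : ℝ) 1)
    (hY : ∀ i, Y i ∈ Icc (0 : ℝ) 1) (hμ : IsFAP 𝒜L μ) (hB : B ∈ 𝒜L) (hμB : μ B = 1)
    (h : ∀ i, H i ⊆ B → X i = Y i) : lowerSInt H 𝒜L X μ ≤ lowerSInt H 𝒜L Y μ := by
  have hμBc : μ Bᶜ = 0 := by rw [hμ.apply_compl hL.1 hB, hμB, sub_self]
  refine lowerSInt_le_of_forall_refining hL hX hμ hB fun R hR hRB =>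
    le_of_eq_of_le (Finset.sum_congr rfl fun C hC => ?_)
      (lowerSum_le_lowerSInt hY hμ hL hR.isFinCover)
  rcases hRB C hC with hCB | hCB
  · rw [atomValues_congr fun i hi => h i (hi.trans hCB)]
  · rw [hμ.apply_eq_zero_of_subset hL.1 (hR.1 hC) (hL.1.compl_mem hB) hCB hμBc, mul_zero,
      mul_zero]

theorem lowerSInt_eq_of_eqOn (hL : IsFieldOver H 𝒜L) (hX : ∀ i, X i ∈ Icc (0 : ℝ) 1)
    (hY : ∀ i, Y i ∈ Icc (0 : ℝ) 1) (hμ : IsFAP 𝒜L μ) (hB : B ∈ 𝒜L) (hμB : μ B = 1)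
    (h : ∀ i, H i ⊆ B → X i = Y i) : lowerSInt H 𝒜L X μ = lowerSInt H 𝒜L Y μ :=
  le_antisymm (lowerSInt_le_of_eqOn hL hX hY hμ hB hμB h)
    (lowerSInt_le_of_eqOn hL hY hX hμ hB hμB fun i hi => (h i hi).symm)

theorem lowerSInt_restrict (hL : IsFieldOver H 𝒜L) (hX : ∀ i, X i ∈ Icc (0 : ℝ) 1)
    (hY : ∀ i, Y i ∈ Icc (0 : ℝ) 1) (hμ : IsFAP 𝒜L μ) (hν : IsFAP 𝒜L ν) (hB : B ∈ 𝒜L)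
    (hYB : ∀ i, H i ⊆ B → Y i = X i) (hYBc : ∀ i, H i ⊆ Bᶜ → Y i = 0)
    (hμν : ∀ A ∈ 𝒜L, μ (A ∩ B) = μ B * ν A) :
    lowerSInt H 𝒜L Y μ = μ B * lowerSInt H 𝒜L X ν := by
  have hsum : ∀ R, IsFinPart 𝒜L R → (∀ C ∈ R, C ⊆ B ∨ C ⊆ Bᶜ) →
      lowerSum H Y μ R = μ B * lowerSum H X ν R := by
    intro R hR hRB
    rw [lowerSum, lowerSum, Finset.mul_sum]
    refine Finset.sum_congr rfl fun C hC => ?_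
    rcases hRB C hC with hCB | hCB
    · rw [atomValues_congr fun i hi => hYB i (hi.trans hCB), ← inter_eq_self_of_subset_left hCB,
        hμν C (hR.1 hC), inter_eq_self_of_subset_left hCB]
      ring
    · have h0 : μ B * ν C = 0 := by
        rw [← hμν C (hR.1 hC), (subset_compl_iff_disjoint_right.1 hCB).inter_eq,
          hμ.apply_empty hL.1]
      rw [sInf_atomValues_mul_eq hL hμ (hR.1 hC) fun i hi => hYBc i (hi.trans hCB)]
      linear_combination (-sInf (atomValues H X C)) * h0
  refine le_antisymm (lowerSInt_le_of_forall_refining hL hY hμ hB fun R hR hRB => ?_) ?_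
  · rw [hsum R hR hRB]
    exact mul_le_mul_of_nonneg_left (lowerSum_le_lowerSInt hX hν hL hR.isFinCover) (hμ.nonneg hB)
  · rcases (hμ.nonneg hB).eq_or_lt with h0 | hpos
    · rw [← h0, zero_mul]
      exact lowerSInt_nonneg hY hμ hL
    · rw [← le_div_iff₀' hpos]
      refine lowerSInt_le_of_forall_refining hL hX hν hB fun R hR hRB => ?_
      rw [le_div_iff₀' hpos, ← hsum R hR hRB]
      exact lowerSum_le_lowerSInt hY hμ hL hR.isFinCover

end Integral

noncomputable def firstAtom (H : ι → Set Ω) (K : Set Ω) (h : ∃ i, H i ⊆ K) : ι :=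
  (IsWellFounded.wf (r := WellOrderingRel (α := ι))).min {i | H i ⊆ K} h

noncomputable def condPrior (H : ι → Set Ω) (π : Set Ω → ℝ) (A K : Set Ω) : ℝ :=
  if 0 < π K then π (A ∩ K) / π K
  else if h : ∃ i, H i ⊆ K then (if H (firstAtom H K h) ⊆ A then 1 else 0) else 0

section CondPrior

variable {H : ι → Set Ω} {𝒜L : Set (Set Ω)} {π : Set Ω → ℝ} {A B K : Set Ω}

theorem firstAtom_subset (h : ∃ i, H i ⊆ K) : H (firstAtom H K h) ⊆ K :=
  (IsWellFounded.wf (r := WellOrderingRel (α := ι))).min_mem {i | H i ⊆ K} h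

theorem firstAtom_eq_of_subset (hK : ∃ i, H i ⊆ K) (hB : ∃ i, H i ⊆ B) (hBK : B ⊆ K)
    (hfirst : H (firstAtom H K hK) ⊆ B) : firstAtom H B hB = firstAtom H K hK := by
  have hwf := IsWellFounded.wf (r := WellOrderingRel (α := ι))
  rcases trichotomous_of WellOrderingRel (firstAtom H B hB) (firstAtom H K hK) with h | h | h
  · exact absurd h (hwf.not_lt_min _ ((firstAtom_subset hB).trans hBK))
  · exact h
  · exact absurd h (hwf.not_lt_min _ hfirst)

theorem condPrior_of_pos (hK : 0 < π K) : condPrior H π A K = π (A ∩ K) / π K :=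
  if_pos hK

theorem condPrior_of_not_pos (hK : ¬ 0 < π K) (h : ∃ i, H i ⊆ K) :
    condPrior H π A K = if H (firstAtom H K h) ⊆ A then 1 else 0 := by
  rw [condPrior, if_neg hK, dif_pos h]

theorem condPrior_univ (hπ : IsFAP 𝒜L π) (A : Set Ω) : condPrior H π A univ = π A := by
  rw [condPrior_of_pos (by simp [hπ.apply_univ]), inter_univ, hπ.apply_univ, div_one]

theorem condPrior_self (hL : IsFieldOver H 𝒜L) (hK : K ∈ 𝒜L) (hKne : K.Nonempty) :
    condPrior H π K K = 1 := by
  by_cases hpos : 0 < π K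
  · rw [condPrior_of_pos hpos, inter_self, div_self hpos.ne']
  · have h := hL.exists_subset hK hKne
    rw [condPrior_of_not_pos hpos h, if_pos (firstAtom_subset h)]

theorem condPrior_isFAP (hH : IsPartition H) (hL : IsFieldOver H 𝒜L) (hπ : IsFAP 𝒜L π)
    (hK : K ∈ 𝒜L) (hKne : K.Nonempty) : IsFAP 𝒜L fun A => condPrior H π A K := by
  by_cases hpos : 0 < π K
  · simpa only [condPrior_of_pos hpos] using hπ.cond hL.1 hK hpos
  · have h := hL.exists_subset hK hKne
    simpa only [condPrior_of_not_pos hpos h] using hL.isFAP_atom hH (firstAtom H K h)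

theorem condPrior_inter (hL : IsFieldOver H 𝒜L) (hπ : IsFAP 𝒜L π) (hA : A ∈ 𝒜L)
    (hB : B ∈ 𝒜L) (hK : K ∈ 𝒜L) (hBK : B ⊆ K) (hBne : B.Nonempty) :
    condPrior H π (A ∩ B) K = condPrior H π B K * condPrior H π A B := by
  have hπB : π B ≤ π K := hπ.mono hL.1 hB hK hBK
  by_cases hposK : 0 < π K
  · rw [condPrior_of_pos hposK, condPrior_of_pos hposK, inter_assoc,
      inter_eq_self_of_subset_left hBK]
    by_cases hposB : 0 < π B
    · rw [condPrior_of_pos hposB]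
      field_simp
    · have hB0 : π B = 0 := le_antisymm (not_lt.1 hposB) (hπ.nonneg hB)
      rw [hB0, hπ.apply_eq_zero_of_subset hL.1 (hL.1.inter_mem hA hB) hB inter_subset_right hB0]
      simp
  · have hposB : ¬ 0 < π B := fun h => hposK (h.trans_le hπB)
    have hK' := hL.exists_subset hK (hBne.mono hBK)
    have hB' := hL.exists_subset hB hBne
    rw [condPrior_of_not_pos hposK hK', condPrior_of_not_pos hposK hK',
      condPrior_of_not_pos hposB hB']
    by_cases hs : H (firstAtom H K hK') ⊆ B
    · rw [firstAtom_eq_of_subset hK' hB' hBK hs]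
      simp [hs]
    · simp [hs]

end CondPrior

namespace IsStrategy

variable {H : ι → Set Ω} {𝒜 : Set (Set Ω)} {σ : Set Ω → ι → ℝ} {E F : Set Ω} {i : ι}

theorem mem_Icc (hσ : IsStrategy 𝒜 H σ) (hF : F ∈ 𝒜) (i : ι) : σ F i ∈ Icc (0 : ℝ) 1 :=
  (hσ i).1.1 F hF

theorem apply_eq_one (hσ : IsStrategy 𝒜 H σ) (hF : F ∈ 𝒜) (hi : H i ⊆ F) : σ F i = 1 :=
  (hσ i).2 F hF hi

theorem apply_eq_zero (h𝒜 : IsSetField 𝒜) (hσ : IsStrategy 𝒜 H σ) (hF : F ∈ 𝒜)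
    (hi : H i ⊆ Fᶜ) : σ F i = 0 := by
  have := (hσ i).1.apply_compl h𝒜 hF
  rw [hσ.apply_eq_one (h𝒜.compl_mem hF) hi] at this
  linarith

theorem apply_inter_of_subset (h𝒜 : IsSetField 𝒜) (hσ : IsStrategy 𝒜 H σ) (hE : E ∈ 𝒜)
    (hF : F ∈ 𝒜) (hi : H i ⊆ E) : σ (E ∩ F) i = σ F i := by
  have hEF := h𝒜.inter_mem hE hF
  have hEcF := h𝒜.inter_mem (h𝒜.compl_mem hE) hF
  have hsplit := (hσ i).1.apply_union hEF hEcF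
    (disjoint_compl_right.mono inter_subset_left inter_subset_left)
  rw [← union_inter_distrib_right, union_compl_self, univ_inter,
    hσ.apply_eq_zero h𝒜 hEcF ((subset_compl_iff_disjoint_right.2
      (disjoint_compl_right.mono_right inter_subset_left)).trans' hi)] at hsplit
  linarith

theorem apply_union (hσ : IsStrategy 𝒜 H σ) (hE : E ∈ 𝒜) (hF : F ∈ 𝒜) (hEF : Disjoint E F) :
    σ (E ∪ F) i = σ E i + σ F i :=
  (hσ i).1.apply_union hE hF hEF

end IsStrategy

noncomputable def disintegration (H : ι → Set Ω) (𝒜L : Set (Set Ω)) (π : Set Ω → ℝ)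
    (σ : Set Ω → ι → ℝ) (F K : Set Ω) : ℝ :=
  lowerSInt H 𝒜L (fun i => σ F i) fun A => condPrior H π A K

section Disintegration

variable {H : ι → Set Ω} {𝒜L 𝒜 : Set (Set Ω)} {π : Set Ω → ℝ} {σ : Set Ω → ι → ℝ}
  {E F K : Set Ω}

theorem disintegration_eq_condPrior (hH : IsPartition H) (hL : IsFieldOver H 𝒜L)
    (hπ : IsFAP 𝒜L π) (h𝒜 : IsSetField 𝒜) (hsub : 𝒜L ⊆ 𝒜) (hσ : IsStrategy 𝒜 H σ)
    (hE : E ∈ 𝒜L) (hK : K ∈ 𝒜L) (hKne : K.Nonempty) :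
    disintegration H 𝒜L π σ E K = condPrior H π E K :=
  lowerSInt_indicator hL (hσ.mem_Icc (hsub hE)) (condPrior_isFAP hH hL hπ hK hKne) hE
    (fun _ => hσ.apply_eq_one (hsub hE)) fun _ => hσ.apply_eq_zero h𝒜 (hsub hE)

theorem disintegration_inter_self (hH : IsPartition H) (hL : IsFieldOver H 𝒜L)
    (hπ : IsFAP 𝒜L π) (h𝒜 : IsSetField 𝒜) (hsub : 𝒜L ⊆ 𝒜) (hσ : IsStrategy 𝒜 H σ)
    (hE : E ∈ 𝒜) (hK : K ∈ 𝒜L) (hKne : K.Nonempty) :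
    disintegration H 𝒜L π σ E K = disintegration H 𝒜L π σ (E ∩ K) K :=
  lowerSInt_eq_of_eqOn hL (hσ.mem_Icc hE) (hσ.mem_Icc (h𝒜.inter_mem hE (hsub hK)))
    (condPrior_isFAP hH hL hπ hK hKne) hK (condPrior_self hL hK hKne) fun i hi => by
      rw [inter_comm, hσ.apply_inter_of_subset h𝒜 (hsub hK) hE hi]

theorem isFAP_disintegration (hH : IsPartition H) (hL : IsFieldOver H 𝒜L) (hπ : IsFAP 𝒜L π)
    (h𝒜 : IsSetField 𝒜) (hσ : IsStrategy 𝒜 H σ)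
    (hcont : ∀ F ∈ 𝒜, ALContinuous H 𝒜L fun i => σ F i) (hK : K ∈ 𝒜L) (hKne : K.Nonempty) :
    IsFAP 𝒜 fun F => disintegration H 𝒜L π σ F K := by
  have hν := condPrior_isFAP hH hL hπ hK hKne
  refine ⟨fun F hF => ⟨lowerSInt_nonneg (hσ.mem_Icc hF) hν hL,
    lowerSInt_le_one (hσ.mem_Icc hF) hν hL⟩, ?_, fun E hE F hF hEF => ?_⟩
  · have hone : (fun i => σ univ i) = fun _ => 1 :=
      funext fun i => hσ.apply_eq_one h𝒜.1 (subset_univ _)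
    simp only [disintegration, hone]
    exact lowerSInt_const hL hν ⟨zero_le_one, le_rfl⟩
  · have hsum : (fun i => σ (E ∪ F) i) = fun i => σ E i + σ F i :=
      funext fun i => hσ.apply_union hE hF hEF
    simp only [disintegration, hsum]
    exact lowerSInt_add hH hL (hσ.mem_Icc hE) (hσ.mem_Icc hF)
      (fun i => hσ.apply_union hE hF hEF ▸ hσ.mem_Icc (h𝒜.union_mem hE hF) i) (hcont E hE)
      (hcont F hF) hν

theorem disintegration_inter (hH : IsPartition H) (hL : IsFieldOver H 𝒜L) (hπ : IsFAP 𝒜L π)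
    (h𝒜 : IsSetField 𝒜) (hsub : 𝒜L ⊆ 𝒜) (hσ : IsStrategy 𝒜 H σ) (hE : E ∈ 𝒜) (hF : F ∈ 𝒜)
    (hK : K ∈ 𝒜L) (hKne : K.Nonempty) (hEK : E ∩ K ∈ 𝒜L) (hEKne : (E ∩ K).Nonempty) :
    disintegration H 𝒜L π σ (E ∩ F) K =
      disintegration H 𝒜L π σ E K * disintegration H 𝒜L π σ F (E ∩ K) := by
  have hEK𝒜 := hsub hEK
  rw [disintegration_inter_self hH hL hπ h𝒜 hsub hσ (h𝒜.inter_mem hE hF) hK hKne,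
    disintegration_inter_self hH hL hπ h𝒜 hsub hσ hE hK hKne,
    disintegration_eq_condPrior hH hL hπ h𝒜 hsub hσ hEK hK hKne,
    show E ∩ F ∩ K = E ∩ K ∩ F by rw [inter_right_comm]]
  exact lowerSInt_restrict hL (hσ.mem_Icc hF) (hσ.mem_Icc (h𝒜.inter_mem hEK𝒜 hF))
    (condPrior_isFAP hH hL hπ hK hKne) (condPrior_isFAP hH hL hπ hEK hEKne) hEK
    (fun i hi => hσ.apply_inter_of_subset h𝒜 hEK𝒜 hF hi)
    (fun i hi => hσ.apply_eq_zero h𝒜 (h𝒜.inter_mem hEK𝒜 hF)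
      (hi.trans (compl_subset_compl.2 inter_subset_left)))
    fun A hA => condPrior_inter hL hπ hA hEK hK inter_subset_right hEKne

theorem disintegration_atom (hH : IsPartition H) (hL : IsFieldOver H 𝒜L) (hπ : IsFAP 𝒜L π)
    (hσ : IsStrategy 𝒜 H σ) (hF : F ∈ 𝒜) (i : ι) : disintegration H 𝒜L π σ F (H i) = σ F i := by
  have hν := condPrior_isFAP hH hL hπ (hL.2.1 i) (hH.1 i)
  rw [disintegration, lowerSInt_eq_of_eqOn hL (hσ.mem_Icc hF) (fun _ => hσ.mem_Icc hF i) hν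
    (hL.2.1 i) (condPrior_self hL (hL.2.1 i) (hH.1 i)) fun j hj => ?_,
    lowerSInt_const hL hν (hσ.mem_Icc hF i)]
  obtain rfl : j = i := by_contra fun hji => hH.not_subset_of_disjoint (hH.2.1 hji) hj
  rfl

theorem disintegration_mem_PfdSet (hH : IsPartition H) (hL : IsFieldOver H 𝒜L)
    (hπ : IsFAP 𝒜L π) (h𝒜 : IsSetField 𝒜) (hsub : 𝒜L ⊆ 𝒜) (hσ : IsStrategy 𝒜 H σ)
    (hcont : ∀ F ∈ 𝒜, ALContinuous H 𝒜L fun i => σ F i) :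
    disintegration H 𝒜L π σ ∈ PfdSet 𝒜 𝒜L H π σ := by
  have := hπ.nonempty hL.1
  refine ⟨fun E hE K hK hKne => disintegration_inter_self hH hL hπ h𝒜 hsub hσ hE hK hKne,
    fun K hK hKne => isFAP_disintegration hH hL hπ h𝒜 hσ hcont hK hKne,
    fun E hE F hF K hK hKne hEK hEKne =>
      disintegration_inter hH hL hπ h𝒜 hsub hσ hE hF hK hKne hEK hEKne,
    fun B hB => ?_, fun F hF i => disintegration_atom hH hL hπ hσ hF i,
    fun F hF K hK hKne => lowerSInt_congr_measure fun A hA =>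
      (disintegration_eq_condPrior hH hL hπ h𝒜 hsub hσ hA hK hKne).symm⟩
  rw [disintegration_eq_condPrior hH hL hπ h𝒜 hsub hσ hB hL.1.1 univ_nonempty,
    condPrior_univ hπ]

end Disintegration

noncomputable def extendPairs (𝒜 ℬ : Set (Set Ω))
    (x : {p : Set Ω × Set Ω // p.1 ∈ 𝒜 ∧ p.2 ∈ ℬ ∧ p.2.Nonempty} → ℝ) (F K : Set Ω) : ℝ :=
  if h : F ∈ 𝒜 ∧ K ∈ ℬ ∧ K.Nonempty then x ⟨(F, K), h⟩ else 0

section Closedness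

variable {𝒜 ℬ : Set (Set Ω)}

theorem restrictPairs_extendPairs
    (x : {p : Set Ω × Set Ω // p.1 ∈ 𝒜 ∧ p.2 ∈ ℬ ∧ p.2.Nonempty} → ℝ) :
    restrictPairs 𝒜 ℬ (extendPairs 𝒜 ℬ x) = x :=
  funext fun p => dif_pos p.2

theorem extendPairs_restrictPairs (Q : Set Ω → Set Ω → ℝ) {F K : Set Ω}
    (h : F ∈ 𝒜 ∧ K ∈ ℬ ∧ K.Nonempty) : extendPairs 𝒜 ℬ (restrictPairs 𝒜 ℬ Q) F K = Q F K :=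
  dif_pos h

theorem continuous_extendPairs : Continuous (extendPairs (Ω := Ω) 𝒜 ℬ) :=
  continuous_pi fun F => continuous_pi fun K => by
    unfold extendPairs
    split_ifs
    exacts [continuous_apply _, continuous_const]

theorem image_restrictPairs_eq_preimage {S : Set (Set Ω → Set Ω → ℝ)}
    (hS : ∀ P ∈ S, ∀ Q, (∀ F ∈ 𝒜, ∀ K ∈ ℬ, K.Nonempty → Q F K = P F K) → Q ∈ S) :
    restrictPairs 𝒜 ℬ '' S = extendPairs 𝒜 ℬ ⁻¹' S := by
  ext x
  constructor
  · rintro ⟨P, hP, rfl⟩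
    exact hS P hP _ fun F hF K hK hKne => extendPairs_restrictPairs P ⟨hF, hK, hKne⟩
  · exact fun hx => ⟨_, hx, restrictPairs_extendPairs x⟩

end Closedness

section PfdSet

variable {H : ι → Set Ω} {𝒜L 𝒜 : Set (Set Ω)} {π : Set Ω → ℝ} {σ : Set Ω → ι → ℝ}
  {P Q : Set Ω → Set Ω → ℝ}

theorem mem_PfdSet_of_eqOn [Nonempty Ω] (hH : IsPartition H) (hL : IsFieldOver H 𝒜L)
    (h𝒜 : IsSetField 𝒜) (hsub : 𝒜L ⊆ 𝒜) (hP : P ∈ PfdSet 𝒜 𝒜L H π σ)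
    (hQP : ∀ F ∈ 𝒜, ∀ K ∈ 𝒜L, K.Nonempty → Q F K = P F K) : Q ∈ PfdSet 𝒜 𝒜L H π σ := by
  obtain ⟨h1, h2, h3, h4, h5, h6⟩ := hP
  refine ⟨fun E hE K hK hKne => ?_, fun K hK hKne => (h2 K hK hKne).congr h𝒜
    fun E hE => hQP E hE K hK hKne, fun E hE F hF K hK hKne hEK hEKne => ?_,
    fun B hB => ?_, fun F hF i => ?_, fun F hF K hK hKne => ?_⟩
  · rw [hQP E hE K hK hKne, hQP _ (h𝒜.inter_mem hE (hsub hK)) K hK hKne, h1 E hE K hK hKne]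
  · rw [hQP _ (h𝒜.inter_mem hE hF) K hK hKne, hQP E hE K hK hKne, hQP F hF _ hEK hEKne,
      h3 E hE F hF K hK hKne hEK hEKne]
  · rw [hQP B (hsub hB) univ hL.1.1 univ_nonempty, h4 B hB]
  · rw [hQP F hF (H i) (hL.2.1 i) (hH.1 i), h5 F hF i]
  · rw [hQP F hF K hK hKne, h6 F hF K hK hKne]
    exact lowerSInt_congr_measure fun A hA => (hQP A (hsub hA) K hK hKne).symm

theorem isClosed_PfdSet (hH : IsPartition H) (hL : IsFieldOver H 𝒜L) (hsub : 𝒜L ⊆ 𝒜)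
    (hσ : IsStrategy 𝒜 H σ) (hcont : ∀ F ∈ 𝒜, ALContinuous H 𝒜L fun i => σ F i) :
    IsClosed (PfdSet 𝒜 𝒜L H π σ) := by
  refine isClosed_of_closure_subset fun P hP => ?_
  have hlim : ∀ p : (Set Ω → Set Ω → ℝ) → Prop, IsClosed {Q | p Q} →
      (∀ Q ∈ PfdSet 𝒜 𝒜L H π σ, p Q) → p P := fun p hp h => closure_minimal h hp hP
  have hFAP : ∀ K ∈ 𝒜L, K.Nonempty → IsFAP 𝒜 fun E => P E K := fun K hK hKne =>
    ⟨fun A hA => ⟨hlim _ (isClosed_le continuous_const (by fun_prop))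
        fun Q hQ => ((hQ.2.1 K hK hKne).1 A hA).1,
      hlim _ (isClosed_le (by fun_prop) continuous_const)
        fun Q hQ => ((hQ.2.1 K hK hKne).1 A hA).2⟩,
    hlim _ (isClosed_eq (by fun_prop) continuous_const) fun Q hQ => (hQ.2.1 K hK hKne).2.1,
    fun A hA B hB hAB => hlim _ (isClosed_eq (by fun_prop) (by fun_prop))
      fun Q hQ => (hQ.2.1 K hK hKne).2.2 A hA B hB hAB⟩
  refine ⟨fun E hE K hK hKne => hlim _ (isClosed_eq (by fun_prop) (by fun_prop))
      fun Q hQ => hQ.1 E hE K hK hKne, hFAP,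
    fun E hE F hF K hK hKne hEK hEKne => hlim _ (isClosed_eq (by fun_prop) (by fun_prop))
      fun Q hQ => hQ.2.2.1 E hE F hF K hK hKne hEK hEKne,
    fun B hB => hlim _ (isClosed_eq (by fun_prop) continuous_const)
      fun Q hQ => hQ.2.2.2.1 B hB,
    fun F hF i => hlim _ (isClosed_eq (by fun_prop) continuous_const)
      fun Q hQ => hQ.2.2.2.2.1 F hF i, fun F hF K hK hKne => ?_⟩
  have hiff : ∀ Q : Set Ω → Set Ω → ℝ, IsFAP 𝒜 (fun E => Q E K) → (Q F K =
      lowerSInt H 𝒜L (fun i => σ F i) (fun B => Q B K) ↔ ∀ T, IsFinPart 𝒜L T →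
        lowerSum H (fun i => σ F i) (fun B => Q B K) T ≤ Q F K ∧
          Q F K ≤ upperSum H (fun i => σ F i) (fun B => Q B K) T) := fun Q hQ =>
    (hcont F hF).eq_lowerSInt_iff hH hL (hσ.mem_Icc hF) (hQ.restrict hsub)
  refine (hiff P (hFAP K hK hKne)).2 fun T hT => ⟨hlim _ ?_ fun Q hQ =>
    ((hiff Q (hQ.2.1 K hK hKne)).1 (hQ.2.2.2.2.2 F hF K hK hKne) T hT).1, hlim _ ?_ fun Q hQ =>
    ((hiff Q (hQ.2.1 K hK hKne)).1 (hQ.2.2.2.2.2 F hF K hK hKne) T hT).2⟩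
  · exact isClosed_le (by unfold lowerSum; fun_prop) (by fun_prop)
  · exact isClosed_le (by fun_prop) (by unfold upperSum; fun_prop)

end PfdSet

end

theorem statement16_general {Ω ι κ : Type*} (H : ι → Set Ω) (E : κ → Set Ω)
    (𝒜L 𝒜E 𝒜 : Set (Set Ω))
    (hH : IsPartition H)
    (h𝒜L : IsFieldOver H 𝒜L)
    (h𝒜 : IsJointField H E 𝒜L 𝒜E 𝒜)
    (π : Set Ω → ℝ) (hπ : IsFAP 𝒜L π)
    (σ : Set Ω → ι → ℝ) (hσ : IsStrategy 𝒜 H σ)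
    (hcont : ∀ F ∈ 𝒜, ALContinuous H 𝒜L fun i => σ F i) :
    (restrictPairs 𝒜 𝒜L '' PfdSet 𝒜 𝒜L H π σ).Nonempty ∧
    IsCompact (restrictPairs 𝒜 𝒜L '' PfdSet 𝒜 𝒜L H π σ) := by
  have := hπ.nonempty h𝒜L.1
  have hsub : 𝒜L ⊆ 𝒜 := h𝒜.2.1
  refine ⟨⟨_, mem_image_of_mem _ (disintegration_mem_PfdSet hH h𝒜L hπ h𝒜.1 hsub hσ hcont)⟩, ?_⟩
  rw [image_restrictPairs_eq_preimage fun P hP Q hQP => mem_PfdSet_of_eqOn hH h𝒜L h𝒜.1 hsub hP hQP]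
  refine (isCompact_univ_pi fun _ => isCompact_Icc (a := (0 : ℝ)) (b := 1)).of_isClosed_subset
    ((isClosed_PfdSet hH h𝒜L hsub hσ hcont).preimage continuous_extendPairs) fun x hx p _ => ?_
  simpa only [extendPairs, dif_pos p.2, Prod.mk.eta, Subtype.coe_eta, mem_Icc] using
    (hx.2.1 _ p.2.2.1 p.2.2.2).1 _ p.2.1

/-- `𝒫^fd` is a nonempty compact subset of `[0,1]^(𝒜 × 𝒜L⁰)` with the
product topology of pointwise convergence. -/
theorem statement16 {Ω ι κ : Type*} [Nonempty Ω] (H : ι → Set Ω) (E : κ → Set Ω)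
    (𝒜L 𝒜E 𝒜 : Set (Set Ω))
    (hH : IsPartition H) (hE : IsPartition E)
    (h𝒜L : IsFieldOver H 𝒜L) (h𝒜E : IsFieldOver E 𝒜E)
    (h𝒜 : IsJointField H E 𝒜L 𝒜E 𝒜)
    (π : Set Ω → ℝ) (hπ : IsFAP 𝒜L π)
    (σ : Set Ω → ι → ℝ) (hσ : IsStrategy 𝒜 H σ)
    (hcont : ∀ F ∈ 𝒜, ALContinuous H 𝒜L fun i => σ F i) :
    (restrictPairs 𝒜 𝒜L '' PfdSet 𝒜 𝒜L H π σ).Nonempty ∧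
    IsCompact (restrictPairs 𝒜 𝒜L '' PfdSet 𝒜 𝒜L H π σ) :=
  statement16_general H E 𝒜L 𝒜E 𝒜 hH h𝒜L h𝒜 π hπ σ hσ hcont
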